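/- Suppose G is a connected simple graph containing adjacent vertices i and j, each of degree at most 4, such that (i,j) is the smallest edge incident to i in the order <_i. Then, for the Superfast Encoding, at least one of the two Pauli operators Ã_{i,j} and Ã_{i,j} B̃_j has weight at most 2. Consequently, if all vertices of G have degree at most 4, the Superfast Encoding stabilizer code fails to correct all single-qubit errors, for every choice of edge orderings and orientations. -/

import Mathlib

/-!
The Pauli string of `Ã_{ij}` is `X` on the edge `(i,j)` and `Z` on the edges at `j` that precede
`(i,j)` in `<_j`; minimality of `(i,j)` in `<_i` leaves nothing at `i`. Multiplying by `B̃_j`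
gives `Y` on `(i,j)` and `Z` on the edges at `j` that follow it. The two weights therefore add
up to `deg j + 1 ≤ 5`, so one of them is at most `2`.

Both operators commute with every loop operator: `Ã_{ij}` anticommutes with `Ã_{lm}` exactly
when the two edges share one vertex, `B̃_j` exactly when `j` is an endpoint of `(l,m)`, and
along a closed loop these signs cancel in pairs. Both anticommute with `B̃_i`, which commutes
with the stabilizer, so neither is proportional to a stabilizer element.
-/

open Matrix

/-- Labels for single-qubit Pauli matrices. -/
inductive P1 : Type
  | I : P1
  | X : P1
  | Y : P1
  | Z : P1
deriving DecidableEq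

/-- The matrix entries of a single-qubit Pauli matrix, with the qubit basis indexed by
`Bool` (`false = |0⟩`, `true = |1⟩`). -/
def P1.entry : P1 → Bool → Bool → ℂ
  | P1.I, a, b => if a = b then 1 else 0
  | P1.X, a, b => if a = b then 0 else 1
  | P1.Y, a, b => if a = b then 0 else if a then Complex.I else -Complex.I
  | P1.Z, a, b => if a = b then (if a then -1 else 1) else 0

/-- The multi-qubit Pauli matrix `⨂_{q ∈ Q} P_{f q}` on the qubits indexed by `Q`,
acting on `(ℂ²)^{⊗Q}` (whose standard basis is indexed by `Q → Bool`). -/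
noncomputable def PauliMatrix {Q : Type*} [Fintype Q] (f : Q → P1) :
    Matrix (Q → Bool) (Q → Bool) ℂ :=
  Matrix.of fun a b => ∏ q, (f q).entry (a q) (b q)

/-- The weight of a Pauli operator: the number of qubits on which it acts nontrivially. -/
noncomputable def pweight {Q : Type*} [Fintype Q] (f : Q → P1) : ℕ :=
  (Finset.univ.filter fun q => f q ≠ P1.I).card

section SuperfastEncoding

variable {V : Type*} [Fintype V] [DecidableEq V] (G : SimpleGraph V) [DecidableRel G.Adj]

/-- The vertex operator `B̃_j = ∏_{k : (j,k) ∈ E} Z_{jk}` of the Superfast Encoding: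
Pauli `Z` on every qubit (edge) incident to the vertex `j`. -/
noncomputable def BtSF (j : V) :
    Matrix (↥G.edgeSet → Bool) (↥G.edgeSet → Bool) ℂ :=
  PauliMatrix fun e => if j ∈ (e : Sym2 V) then P1.Z else P1.I

/-- The edge operator
`Ã_{jk} = ε_{jk} X_{jk} ∏_{(j,p) <_j (j,k)} Z_{jp} ∏_{(k,q) <_k (k,j)} Z_{kq}`
of the Superfast Encoding.  The linear order `<_i` on the edges incident to `i` is
represented by a ranking function `rank i : Sym2 V → ℕ`, injective on incident edges. -/
noncomputable def AtSF (rank : V → Sym2 V → ℕ) (eps : V → V → ℂ) (j k : V) :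
    Matrix (↥G.edgeSet → Bool) (↥G.edgeSet → Bool) ℂ :=
  eps j k • PauliMatrix fun e : ↥G.edgeSet =>
    if (e : Sym2 V) = s(j, k) then P1.X
    else if (j ∈ (e : Sym2 V) ∧ rank j (e : Sym2 V) < rank j s(j, k)) ∨
            (k ∈ (e : Sym2 V) ∧ rank k (e : Sym2 V) < rank k s(j, k)) then P1.Z
    else P1.I

/-- `ζ(0), …, ζ(s) = ζ(0)` is a closed loop in `G`. -/
def IsLoopIn (s : ℕ) (ζ : ℕ → V) : Prop :=
  ζ s = ζ 0 ∧ ∀ t < s, G.Adj (ζ t) (ζ (t + 1))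

/-- The loop operator `Ã(ζ) = i^s Ã_{ζ(0)ζ(1)} ⋯ Ã_{ζ(s-1)ζ(0)}`. -/
noncomputable def loopOpSF (rank : V → Sym2 V → ℕ) (eps : V → V → ℂ)
    (s : ℕ) (ζ : ℕ → V) : Matrix (↥G.edgeSet → Bool) (↥G.edgeSet → Bool) ℂ :=
  (Complex.I ^ s) •
    (((List.range s).map (fun t => AtSF G rank eps (ζ t) (ζ (t + 1)))).prod)

/-- The stabilizer group `S` generated by all loop operators (as a submonoid of the
matrix algebra; every loop operator is an involution, so this is a group). -/
noncomputable def stabSF (rank : V → Sym2 V → ℕ) (eps : V → V → ℂ) :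
    Submonoid (Matrix (↥G.edgeSet → Bool) (↥G.edgeSet → Bool) ℂ) :=
  Submonoid.closure {M | ∃ s ζ, IsLoopIn G s ζ ∧ M = loopOpSF G rank eps s ζ}

/-- A Pauli operator `c • PauliMatrix f` is a logical operator of the code: it commutes
with every element of the stabilizer group `S` and is not proportional to any element
of `S`. -/
def IsLogicalSF (rank : V → Sym2 V → ℕ) (eps : V → V → ℂ) (c : ℂ) (f : ↥G.edgeSet → P1) :
    Prop :=
  (∀ M ∈ stabSF G rank eps, (c • PauliMatrix f) * M = M * (c • PauliMatrix f)) ∧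
  ¬ ∃ (c' : ℂ) (M : Matrix (↥G.edgeSet → Bool) (↥G.edgeSet → Bool) ℂ),
      M ∈ stabSF G rank eps ∧ c • PauliMatrix f = c' • M

end SuperfastEncoding

namespace P1

protected def mul : P1 → P1 → P1
  | I, p => p
  | p, I => p
  | X, X => I
  | Y, Y => I
  | Z, Z => I
  | X, Y => Z
  | Y, X => Z
  | Y, Z => X
  | Z, Y => X
  | Z, X => Y
  | X, Z => Y

instance : Mul P1 := ⟨P1.mul⟩

theorem mul_def (p q : P1) : p * q = P1.mul p q := rfl

def phase : P1 → P1 → ℂ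
  | X, Y => Complex.I
  | Y, X => -Complex.I
  | Y, Z => Complex.I
  | Z, Y => -Complex.I
  | Z, X => Complex.I
  | X, Z => -Complex.I
  | _, _ => 1

def commSign (p q : P1) : ℂ := if p ≠ I ∧ q ≠ I ∧ p ≠ q then -1 else 1

def IsDiag (p : P1) : Prop := p = Z ∨ p = I

protected theorem mul_comm (p q : P1) : p * q = q * p := by
  cases p <;> cases q <;> rfl

theorem mul_self (p : P1) : p * p = I := by
  cases p <;> rfl

theorem X_mul_Z : X * Z = Y := rfl

theorem phase_self (p : P1) : phase p p = 1 := by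
  cases p <;> rfl

theorem phase_ne_zero (p q : P1) : phase p q ≠ 0 := by
  cases p <;> cases q <;> simp [phase]

theorem phase_eq_commSign_mul (p q : P1) : phase p q = commSign p q * phase q p := by
  cases p <;> cases q <;> simp [phase, commSign]

theorem sum_entry_mul_entry (p q : P1) (a b : Bool) :
    ∑ c : Bool, p.entry a c * q.entry c b = phase p q * (p * q).entry a b := by
  cases p <;> cases q <;> cases a <;> cases b <;>
    simp [P1.entry, phase, mul_def, P1.mul]

theorem commSign_self (p : P1) : commSign p p = 1 := by
  simp [commSign]

theorem commSign_comm (p q : P1) : commSign p q = commSign q p := by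
  cases p <;> cases q <;> rfl

theorem commSign_of_isDiag {p q : P1} (hp : p.IsDiag) (hq : q.IsDiag) : commSign p q = 1 := by
  rcases hp with rfl | rfl <;> rcases hq with rfl | rfl <;> rfl

theorem commSign_X_left {p : P1} (hp : p.IsDiag) :
    commSign X p = if p = Z then -1 else 1 := by
  rcases hp with rfl | rfl <;> rfl

theorem ite_ne_I_add_ite_mul_Z_ne_I {p : P1} (hp : p.IsDiag) :
    ((if p ≠ I then 1 else 0) + if p * Z ≠ I then 1 else 0 : ℕ) = 1 := by
  rcases hp with rfl | rfl <;> rfl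

end P1

section PauliString

variable {Q : Type*} [Fintype Q]

def pauliPhase (f g : Q → P1) : ℂ := ∏ q, P1.phase (f q) (g q)

def pauliCommSign (f g : Q → P1) : ℂ := ∏ q, P1.commSign (f q) (g q)

theorem pauliPhase_ne_zero (f g : Q → P1) : pauliPhase f g ≠ 0 :=
  Finset.prod_ne_zero_iff.mpr fun _ _ => P1.phase_ne_zero _ _

theorem pauliCommSign_comm (f g : Q → P1) : pauliCommSign f g = pauliCommSign g f :=
  Finset.prod_congr rfl fun _ _ => P1.commSign_comm _ _

theorem pauliCommSign_self (f : Q → P1) : pauliCommSign f f = 1 :=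
  Finset.prod_eq_one fun _ _ => P1.commSign_self _

theorem pauliCommSign_eq_prod_of_isDiag {f g : Q → P1} (T : Finset Q)
    (h : ∀ q ∉ T, (f q).IsDiag ∧ (g q).IsDiag) :
    pauliCommSign f g = ∏ q ∈ T, P1.commSign (f q) (g q) :=
  (Finset.prod_subset (Finset.subset_univ T) fun q _ hq =>
    P1.commSign_of_isDiag (h q hq).1 (h q hq).2).symm

theorem pweight_eq_sum (f : Q → P1) : pweight f = ∑ q, if f q ≠ P1.I then 1 else 0 :=
  Finset.card_filter _ _

theorem PauliMatrix_const_I : PauliMatrix (fun _ : Q => P1.I) = 1 := by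
  ext a b
  by_cases h : a = b
  · subst h
    simp [PauliMatrix, P1.entry]
  · obtain ⟨q, hq⟩ := Function.ne_iff.mp h
    rw [Matrix.one_apply_ne h]
    exact Finset.prod_eq_zero (Finset.mem_univ q) (by simp [P1.entry, hq])

variable [DecidableEq Q]

theorem PauliMatrix_mul (f g : Q → P1) :
    PauliMatrix f * PauliMatrix g = pauliPhase f g • PauliMatrix (f * g) := by
  ext a b
  simp only [Matrix.mul_apply, PauliMatrix, Matrix.of_apply, Matrix.smul_apply, smul_eq_mul,
    pauliPhase, Pi.mul_apply, ← Finset.prod_mul_distrib, ← P1.sum_entry_mul_entry]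
  exact (Fintype.prod_sum fun q c => (f q).entry (a q) c * (g q).entry c (b q)).symm

theorem PauliMatrix_mul_self (f : Q → P1) : PauliMatrix f * PauliMatrix f = 1 := by
  rw [PauliMatrix_mul, show f * f = fun _ => P1.I from funext fun q => P1.mul_self (f q),
    PauliMatrix_const_I]
  simp [pauliPhase, P1.phase_self]

theorem PauliMatrix_ne_zero (f : Q → P1) : PauliMatrix f ≠ 0 := fun h =>
  one_ne_zero (α := Matrix (Q → Bool) (Q → Bool) ℂ)
    (by simpa [h] using (PauliMatrix_mul_self f).symm)

theorem PauliMatrix_mul_comm (f g : Q → P1) :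
    PauliMatrix f * PauliMatrix g = pauliCommSign f g • (PauliMatrix g * PauliMatrix f) := by
  rw [PauliMatrix_mul, PauliMatrix_mul, smul_smul,
    show g * f = f * g from funext fun q => P1.mul_comm _ _, pauliPhase, pauliPhase,
    pauliCommSign, ← Finset.prod_mul_distrib]
  exact congrArg (· • _) (Finset.prod_congr rfl fun _ _ => P1.phase_eq_commSign_mul _ _)

end PauliString

theorem mul_prod_map_range_of_intertwine {M : Type*} [Monoid M] (A Y : ℕ → M) (s : ℕ)
    (h : ∀ t < s, Y t * A t = A t * Y (t + 1)) :
    Y 0 * ((List.range s).map A).prod = ((List.range s).map A).prod * Y s := by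
  induction s with
  | zero => simp
  | succ s ih =>
    rw [List.range_succ, List.map_append, List.prod_append, List.map_singleton,
      List.prod_singleton, ← mul_assoc, ih fun t ht => h t (by omega), mul_assoc,
      h s (by omega), mul_assoc]

theorem ite_neg_one_mul_ite_neg_one {α : Type*} [Ring α] (P Q : Prop) [Decidable P]
    [Decidable Q] :
    ((if P then -1 else 1) * (if Q then -1 else 1) : α) = if (P ↔ Q) then 1 else -1 := by
  by_cases hP : P <;> by_cases hQ : Q <;> simp [hP, hQ]

theorem Sym2.mem_iff_mem_iff_not_exists_mem {V : Type*} {a : Sym2 V} {l m : V} (hlm : l ≠ m)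
    (ha : s(l, m) ≠ a) : (l ∈ a ↔ m ∈ a) ↔ ¬∃ v ∈ s(l, m), v ∈ a := by
  have hnot : ¬(l ∈ a ∧ m ∈ a) := fun h =>
    ha (Sym2.eq_of_ne_mem hlm (Sym2.mem_mk_left _ _) (Sym2.mem_mk_right _ _) h.1 h.2)
  simp only [Sym2.mem_iff, exists_eq_or_imp, exists_eq_left]
  tauto

/-- Distinct edges share at most one vertex `v`, and `rank v` puts exactly one of them first. -/
theorem exists_rank_lt_iff_exists_rank_lt_iff {V α : Type*} [LinearOrder α]
    (rank : V → Sym2 V → α) {a b : Sym2 V} (hab : a ≠ b)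
    (hinj : ∀ v ∈ a, v ∈ b → rank v a ≠ rank v b) :
    ((∃ v ∈ b, v ∈ a ∧ rank v a < rank v b) ↔
        (∃ v ∈ a, v ∈ b ∧ rank v b < rank v a)) ↔ ¬∃ v ∈ b, v ∈ a := by
  constructor
  · rintro h ⟨v, hvb, hva⟩
    have huniq : ∀ w ∈ b, w ∈ a → w = v := fun w hwb hwa => by
      by_contra hwv
      exact hab (Sym2.eq_of_ne_mem hwv hwa hva hwb hvb)
    rcases (hinj v hva hvb).lt_or_gt with hlt | hgt
    · obtain ⟨w, hwa, hwb, hw⟩ := h.mp ⟨v, hvb, hva, hlt⟩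
      rw [huniq w hwb hwa] at hw
      exact lt_asymm hlt hw
    · obtain ⟨w, hwb, hwa, hw⟩ := h.mpr ⟨v, hva, hvb, hgt⟩
      rw [huniq w hwb hwa] at hw
      exact lt_asymm hgt hw
  · intro h
    exact iff_of_false (fun ⟨v, hvb, hva, _⟩ => h ⟨v, hvb, hva⟩)
      (fun ⟨v, hva, hvb, _⟩ => h ⟨v, hvb, hva⟩)

section SuperfastEncodingStrings

variable {V : Type*} [DecidableEq V] {G : SimpleGraph V} (rank : V → Sym2 V → ℕ)

variable (G) in
def edgeString (j k : V) : G.edgeSet → P1 := fun e =>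
  if (e : Sym2 V) = s(j, k) then P1.X
  else if (j ∈ (e : Sym2 V) ∧ rank j (e : Sym2 V) < rank j s(j, k)) ∨
          (k ∈ (e : Sym2 V) ∧ rank k (e : Sym2 V) < rank k s(j, k)) then P1.Z
  else P1.I

variable (G) in
def vertexString (j : V) : G.edgeSet → P1 := fun e => if j ∈ (e : Sym2 V) then P1.Z else P1.I

theorem edgeString_comm (j k : V) : edgeString G rank j k = edgeString G rank k j := by
  funext e
  simp only [edgeString, Sym2.eq_swap (a := k), or_comm]

theorem edgeString_apply_of_eq {j k : V} {e : G.edgeSet} (he : (e : Sym2 V) = s(j, k)) :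
    edgeString G rank j k e = P1.X := if_pos he

theorem edgeString_apply_eq_Z_iff {j k : V} {e : G.edgeSet} (he : (e : Sym2 V) ≠ s(j, k)) :
    edgeString G rank j k e = P1.Z ↔
      ∃ v ∈ s(j, k), v ∈ (e : Sym2 V) ∧ rank v e < rank v s(j, k) := by
  simp only [edgeString, if_neg he, Sym2.mem_iff, exists_eq_or_imp, exists_eq_left]
  split_ifs <;> simp_all

theorem isDiag_edgeString {j k : V} {e : G.edgeSet} (he : (e : Sym2 V) ≠ s(j, k)) :
    (edgeString G rank j k e).IsDiag := by
  simp only [edgeString, if_neg he]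
  split_ifs <;> simp [P1.IsDiag]

variable (G) in
theorem isDiag_vertexString (j : V) (e : G.edgeSet) : (vertexString G j e).IsDiag := by
  unfold vertexString
  split_ifs <;> simp [P1.IsDiag]

variable [Fintype V] [DecidableRel G.Adj]

theorem AtSF_eq_smul (eps : V → V → ℂ) (j k : V) :
    AtSF G rank eps j k = eps j k • PauliMatrix (edgeString G rank j k) := rfl

theorem BtSF_eq (j : V) : BtSF G j = PauliMatrix (vertexString G j) := rfl

theorem AtSF_mul_BtSF_eq_smul (eps : V → V → ℂ) (j k : V) :
    AtSF G rank eps j k * BtSF G k =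
      (eps j k * pauliPhase (edgeString G rank j k) (vertexString G k)) •
        PauliMatrix (edgeString G rank j k * vertexString G k) := by
  rw [AtSF_eq_smul, BtSF_eq, smul_mul_assoc, PauliMatrix_mul, smul_smul]

theorem pauliCommSign_vertexString_edgeString (j : V) {l m : V} (hlm : G.Adj l m) :
    pauliCommSign (vertexString G j) (edgeString G rank l m) =
      if (l = j ↔ m = j) then 1 else -1 := by
  set b : G.edgeSet := ⟨s(l, m), hlm⟩
  rw [pauliCommSign_eq_prod_of_isDiag {b} fun e he => ⟨isDiag_vertexString G j e,
      isDiag_edgeString rank fun h => Finset.notMem_singleton.mp he (Subtype.ext h)⟩,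
    Finset.prod_singleton, edgeString_apply_of_eq rank rfl, P1.commSign_comm,
    P1.commSign_X_left (isDiag_vertexString G j b)]
  simp only [b, vertexString, Sym2.mem_iff]
  rcases eq_or_ne l j with rfl | hl
  · simp [hlm.ne']
  · rcases eq_or_ne m j with rfl | hm
    · simp [hl]
    · simp [hl, hm, hl.symm, hm.symm]

theorem pauliCommSign_edgeString
    (hrank : ∀ v : V, Set.InjOn (rank v) {e : Sym2 V | e ∈ G.edgeSet ∧ v ∈ e})
    {i j l m : V} (hij : G.Adj i j) (hlm : G.Adj l m) :
    pauliCommSign (edgeString G rank i j) (edgeString G rank l m) =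
      if (l ∈ s(i, j) ↔ m ∈ s(i, j)) then 1 else -1 := by
  by_cases hba : s(l, m) = s(i, j)
  · have hl : l ∈ s(i, j) := hba ▸ Sym2.mem_mk_left l m
    have hm : m ∈ s(i, j) := hba ▸ Sym2.mem_mk_right l m
    rw [if_pos (iff_of_true hl hm)]
    rcases Sym2.eq_iff.mp hba with ⟨rfl, rfl⟩ | ⟨rfl, rfl⟩
    · exact pauliCommSign_self _
    · rw [edgeString_comm rank l m]
      exact pauliCommSign_self _
  · set a : G.edgeSet := ⟨s(i, j), hij⟩
    set b : G.edgeSet := ⟨s(l, m), hlm⟩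
    have hab : a ≠ b := fun h => hba (congrArg Subtype.val h).symm
    have hdiag : ∀ e ∉ ({a, b} : Finset G.edgeSet),
        (edgeString G rank i j e).IsDiag ∧ (edgeString G rank l m e).IsDiag := by
      intro e he
      simp only [Finset.mem_insert, Finset.mem_singleton, not_or] at he
      exact ⟨isDiag_edgeString rank fun h => he.1 (Subtype.ext h),
        isDiag_edgeString rank fun h => he.2 (Subtype.ext h)⟩
    rw [pauliCommSign_eq_prod_of_isDiag _ hdiag, Finset.prod_pair hab,
      edgeString_apply_of_eq rank (e := a) rfl, edgeString_apply_of_eq rank (e := b) rfl,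
      P1.commSign_X_left (isDiag_edgeString rank (Ne.symm hba)), P1.commSign_comm,
      P1.commSign_X_left (isDiag_edgeString rank hba), ite_neg_one_mul_ite_neg_one]
    simp only [edgeString_apply_eq_Z_iff rank (e := b) hba,
      edgeString_apply_eq_Z_iff rank (e := a) (Ne.symm hba), a, b,
      Sym2.mem_iff_mem_iff_not_exists_mem hlm.ne hba,
      exists_rank_lt_iff_exists_rank_lt_iff rank (Ne.symm hba) fun v hva hvb h =>
        hba (hrank v ⟨hlm, hvb⟩ ⟨hij, hva⟩ h.symm)]

end SuperfastEncodingStrings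

section SuperfastEncodingCode

variable {V : Type*} [Fintype V] [DecidableEq V] {G : SimpleGraph V} [DecidableRel G.Adj]
  {rank : V → Sym2 V → ℕ} {eps : V → V → ℂ}

/-- With `σ v = -1` if `p v` and `1` otherwise, `σ (ζ t) • f` is carried across
`Ã_{ζ(t)ζ(t+1)}` to `σ (ζ (t+1)) • f`; around a closed loop it comes back to `σ (ζ 0) • f`. -/
theorem commute_loopOpSF {f : G.edgeSet → P1} (p : V → Prop) [DecidablePred p]
    (hf : ∀ l m, G.Adj l m →
      pauliCommSign f (edgeString G rank l m) = if (p l ↔ p m) then 1 else -1)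
    {s : ℕ} {ζ : ℕ → V} (hζ : IsLoopIn G s ζ) :
    Commute (PauliMatrix f) (loopOpSF G rank eps s ζ) := by
  set σ : V → ℂ := fun v => if p v then -1 else 1
  have hσ : ∀ v, σ v * σ v = 1 := fun v => by by_cases h : p v <;> simp [σ, h]
  have hstep : ∀ t < s, σ (ζ t) • PauliMatrix f * AtSF G rank eps (ζ t) (ζ (t + 1)) =
      AtSF G rank eps (ζ t) (ζ (t + 1)) * σ (ζ (t + 1)) • PauliMatrix f := by
    intro t ht
    rw [AtSF_eq_smul, smul_mul_smul_comm, smul_mul_smul_comm, PauliMatrix_mul_comm, smul_smul,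
      hf _ _ (hζ.2 t ht), ← ite_neg_one_mul_ite_neg_one]
    congr 1
    linear_combination (eps (ζ t) (ζ (t + 1)) * σ (ζ (t + 1))) * hσ (ζ t)
  have hloop := mul_prod_map_range_of_intertwine _ _ s hstep
  rw [hζ.1] at hloop
  have hne : σ (ζ 0) ≠ 0 := left_ne_zero_of_mul_eq_one (hσ (ζ 0))
  exact ((Commute.smul_left_iff₀ hne).mp hloop).smul_right _

theorem commute_of_mem_stabSF {W : Matrix (G.edgeSet → Bool) (G.edgeSet → Bool) ℂ}
    (hW : ∀ s ζ, IsLoopIn G s ζ → Commute W (loopOpSF G rank eps s ζ))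
    {M : Matrix (G.edgeSet → Bool) (G.edgeSet → Bool) ℂ} (hM : M ∈ stabSF G rank eps) :
    Commute W M := by
  have hle : stabSF G rank eps ≤ Submonoid.centralizer {W} := by
    refine Submonoid.closure_le.mpr ?_
    rintro _ ⟨s, ζ, hζ, rfl⟩
    exact Submonoid.mem_centralizer_iff.mpr fun _ h => h ▸ (hW s ζ hζ).eq
  exact Submonoid.mem_centralizer_iff.mp (hle hM) W rfl

theorem commute_AtSF_of_mem_stabSF
    (hrank : ∀ v : V, Set.InjOn (rank v) {e : Sym2 V | e ∈ G.edgeSet ∧ v ∈ e})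
    {i j : V} (hij : G.Adj i j) {M : Matrix (G.edgeSet → Bool) (G.edgeSet → Bool) ℂ}
    (hM : M ∈ stabSF G rank eps) : Commute (AtSF G rank eps i j) M :=
  commute_of_mem_stabSF (fun _ _ hζ => (commute_loopOpSF (· ∈ s(i, j))
    (fun _ _ hlm => pauliCommSign_edgeString rank hrank hij hlm) hζ).smul_left _) hM

theorem commute_BtSF_of_mem_stabSF (j : V)
    {M : Matrix (G.edgeSet → Bool) (G.edgeSet → Bool) ℂ} (hM : M ∈ stabSF G rank eps) :
    Commute (BtSF G j) M :=
  commute_of_mem_stabSF (fun _ _ hζ => commute_loopOpSF (· = j)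
    (fun _ _ hlm => pauliCommSign_vertexString_edgeString rank j hlm) hζ) hM

theorem AtSF_mul_BtSF_left {i j : V} (hij : G.Adj i j) :
    AtSF G rank eps i j * BtSF G i = -(BtSF G i * AtSF G rank eps i j) := by
  rw [AtSF_eq_smul, BtSF_eq, smul_mul_assoc, PauliMatrix_mul_comm, pauliCommSign_comm,
    pauliCommSign_vertexString_edgeString rank i hij, if_neg (by simpa using hij.ne'),
    neg_one_smul, mul_smul_comm, smul_neg]

theorem commute_BtSF (i j : V) : Commute (BtSF G i) (BtSF G j) := by
  rw [Commute, SemiconjBy, BtSF_eq, BtSF_eq, PauliMatrix_mul_comm,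
    pauliCommSign_eq_prod_of_isDiag ∅ fun e _ =>
      ⟨isDiag_vertexString G i e, isDiag_vertexString G j e⟩,
    Finset.prod_empty, one_smul]

theorem AtSF_mul_BtSF_mul_BtSF_left {i j : V} (hij : G.Adj i j) :
    AtSF G rank eps i j * BtSF G j * BtSF G i =
      -(BtSF G i * (AtSF G rank eps i j * BtSF G j)) := by
  rw [mul_assoc, (commute_BtSF j i).eq, ← mul_assoc, AtSF_mul_BtSF_left hij, neg_mul, mul_assoc]

/-- Were `W` proportional to a stabilizer element it would commute with `B`, so `B * W = 0`. -/
theorem isLogicalSF_of_anticommute {c : ℂ} (hc : c ≠ 0) {f : G.edgeSet → P1}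
    {W B : Matrix (G.edgeSet → Bool) (G.edgeSet → Bool) ℂ} (hW : W = c • PauliMatrix f)
    (hWS : ∀ M ∈ stabSF G rank eps, Commute W M) (hB : B * B = 1)
    (hBS : ∀ M ∈ stabSF G rank eps, Commute B M) (hanti : W * B = -(B * W)) :
    IsLogicalSF G rank eps c f := by
  refine ⟨fun M hM => hW ▸ (hWS M hM).eq, ?_⟩
  rintro ⟨c', M, hM, hcM⟩
  have hcomm : W * B = B * W := by
    rw [hW, hcM]
    exact ((hBS M hM).smul_right c').eq.symm
  have hBW2 : (2 : ℂ) • (B * W) = 0 := by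
    rw [two_smul]
    exact eq_neg_iff_add_eq_zero.mp (hcomm.symm.trans hanti)
  have hW0 : W = 0 := by
    rw [← one_mul W, ← hB, mul_assoc, (smul_eq_zero.mp hBW2).resolve_left two_ne_zero, mul_zero]
  exact PauliMatrix_ne_zero f ((smul_eq_zero.mp (hW ▸ hW0)).resolve_left hc)

end SuperfastEncodingCode

section Weight

variable {V : Type*} [Fintype V] [DecidableEq V] {G : SimpleGraph V} [DecidableRel G.Adj]
  {rank : V → Sym2 V → ℕ}

theorem card_filter_mem_edgeSet (j : V) :
    (Finset.univ.filter fun e : G.edgeSet => j ∈ (e : Sym2 V)).card = G.degree j := by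
  rw [← G.card_incidenceSet_eq_degree, ← Fintype.card_subtype]
  exact Fintype.card_congr (Equiv.subtypeSubtypeEquivSubtypeInter (· ∈ G.edgeSet) (j ∈ ·))

omit [Fintype V] [DecidableRel G.Adj] in
theorem edgeString_apply_eq_I {i j : V}
    (hmin : ∀ e ∈ G.edgeSet, i ∈ e → e ≠ s(i, j) → rank i s(i, j) < rank i e)
    {e : G.edgeSet} (he : (e : Sym2 V) ≠ s(i, j)) (hj : j ∉ (e : Sym2 V)) :
    edgeString G rank i j e = P1.I := by
  simp only [edgeString, if_neg he, hj, false_and, or_false, ite_eq_right_iff]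
  exact fun h => absurd (hmin e e.2 h.1 he) (lt_asymm h.2)

theorem pweight_edgeString_add_pweight_mul_vertexString {i j : V} (hij : G.Adj i j)
    (hmin : ∀ e ∈ G.edgeSet, i ∈ e → e ≠ s(i, j) → rank i s(i, j) < rank i e) :
    pweight (edgeString G rank i j) + pweight (edgeString G rank i j * vertexString G j) =
      G.degree j + 1 := by
  set a : G.edgeSet := ⟨s(i, j), hij⟩
  have hcount : ∀ e : G.edgeSet,
      ((if edgeString G rank i j e ≠ P1.I then 1 else 0) +
        if (edgeString G rank i j * vertexString G j) e ≠ P1.I then 1 else 0) =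
      (if j ∈ (e : Sym2 V) then 1 else 0) + if e = a then 1 else 0 := by
    intro e
    by_cases hea : e = a
    · have hja : j ∈ (a : Sym2 V) := Sym2.mem_mk_right i j
      simp only [hea, Pi.mul_apply, edgeString_apply_of_eq rank (e := a) rfl, vertexString,
        if_pos hja, P1.X_mul_Z]
      decide
    · have he : (e : Sym2 V) ≠ s(i, j) := fun h => hea (Subtype.ext h)
      by_cases hj : j ∈ (e : Sym2 V)
      · simp only [Pi.mul_apply, vertexString, if_pos hj, if_neg hea, add_zero]
        exact P1.ite_ne_I_add_ite_mul_Z_ne_I (isDiag_edgeString rank he)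
      · simp [vertexString, hj, hea, edgeString_apply_eq_I hmin he hj, P1.mul_def, P1.mul]
  rw [pweight_eq_sum, pweight_eq_sum, ← Finset.sum_add_distrib, Finset.sum_congr rfl
    fun e _ => hcount e, Finset.sum_add_distrib, ← Finset.card_filter, card_filter_mem_edgeSet]
  simp

end Weight

theorem stmt10_general {V : Type*} [Fintype V] [DecidableEq V] (G : SimpleGraph V)
    [DecidableRel G.Adj]
    (rank : V → Sym2 V → ℕ)
    (hrank : ∀ i : V, Set.InjOn (rank i) {e : Sym2 V | e ∈ G.edgeSet ∧ i ∈ e})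
    (eps : V → V → ℂ)
    (heps : ∀ j k, G.Adj j k → (eps j k = 1 ∨ eps j k = -1) ∧ eps k j = - eps j k)
    (i j : V) (hadj : G.Adj i j) (hdj : G.degree j ≤ 4)
    (hmin : ∀ e ∈ G.edgeSet, i ∈ e → e ≠ s(i, j) → rank i s(i, j) < rank i e) :
    ((∃ (c : ℂ) (f : ↥G.edgeSet → P1), c ≠ 0 ∧
        AtSF G rank eps i j = c • PauliMatrix f ∧ pweight f ≤ 2) ∨
     (∃ (c : ℂ) (f : ↥G.edgeSet → P1), c ≠ 0 ∧
        AtSF G rank eps i j * BtSF G j = c • PauliMatrix f ∧ pweight f ≤ 2)) ∧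
    ((∀ v : V, G.degree v ≤ 4) →
      ∃ (c : ℂ) (f : ↥G.edgeSet → P1), c ≠ 0 ∧ pweight f ≤ 2 ∧
        IsLogicalSF G rank eps c f) := by
  have hε : eps i j ≠ 0 := by rcases (heps i j hadj).1 with h | h <;> simp [h]
  have hc : eps i j * pauliPhase (edgeString G rank i j) (vertexString G j) ≠ 0 :=
    mul_ne_zero hε (pauliPhase_ne_zero _ _)
  have hA : ∀ M ∈ stabSF G rank eps, Commute (AtSF G rank eps i j) M :=
    fun _ => commute_AtSF_of_mem_stabSF hrank hadj
  have hBi : ∀ M ∈ stabSF G rank eps, Commute (BtSF G i) M :=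
    fun _ => commute_BtSF_of_mem_stabSF i
  have hweight := pweight_edgeString_add_pweight_mul_vertexString hadj hmin
  rcases (by omega : pweight (edgeString G rank i j) ≤ 2 ∨
      pweight (edgeString G rank i j * vertexString G j) ≤ 2) with h | h
  · exact ⟨Or.inl ⟨_, _, hε, AtSF_eq_smul rank eps i j, h⟩, fun _ => ⟨_, _, hε, h,
      isLogicalSF_of_anticommute hε (AtSF_eq_smul rank eps i j) hA (PauliMatrix_mul_self _) hBi
        (AtSF_mul_BtSF_left hadj)⟩⟩
  · exact ⟨Or.inr ⟨_, _, hc, AtSF_mul_BtSF_eq_smul rank eps i j, h⟩, fun _ => ⟨_, _, hc, h,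
      isLogicalSF_of_anticommute hc (AtSF_mul_BtSF_eq_smul rank eps i j)
        (fun M hM => (hA M hM).mul_left (commute_BtSF_of_mem_stabSF j hM))
        (PauliMatrix_mul_self _) hBi (AtSF_mul_BtSF_mul_BtSF_left hadj)⟩⟩

/-- If `G` contains adjacent vertices `i, j` of degree at most `4` such that `(i,j)` is the
smallest edge incident to `i`, then `Ã_{ij}` or `Ã_{ij} B̃_j` has weight at most `2`;
consequently, if every vertex of `G` has degree at most `4` then the Superfast Encoding
fails to correct all single-qubit errors. -/
theorem stmt10 {V : Type*} [Fintype V] [DecidableEq V] (G : SimpleGraph V)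
    [DecidableRel G.Adj] (hconn : G.Connected)
    (rank : V → Sym2 V → ℕ)
    (hrank : ∀ i : V, Set.InjOn (rank i) {e : Sym2 V | e ∈ G.edgeSet ∧ i ∈ e})
    (eps : V → V → ℂ)
    (heps : ∀ j k, G.Adj j k → (eps j k = 1 ∨ eps j k = -1) ∧ eps k j = - eps j k)
    (i j : V) (hadj : G.Adj i j) (hdi : G.degree i ≤ 4) (hdj : G.degree j ≤ 4)
    (hmin : ∀ e ∈ G.edgeSet, i ∈ e → e ≠ s(i, j) → rank i s(i, j) < rank i e) :
    ((∃ (c : ℂ) (f : ↥G.edgeSet → P1), c ≠ 0 ∧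
        AtSF G rank eps i j = c • PauliMatrix f ∧ pweight f ≤ 2) ∨
     (∃ (c : ℂ) (f : ↥G.edgeSet → P1), c ≠ 0 ∧
        AtSF G rank eps i j * BtSF G j = c • PauliMatrix f ∧ pweight f ≤ 2)) ∧
    ((∀ v : V, G.degree v ≤ 4) →
      ∃ (c : ℂ) (f : ↥G.edgeSet → P1), c ≠ 0 ∧ pweight f ≤ 2 ∧
        IsLogicalSF G rank eps c f) :=
  stmt10_general G rank hrank eps heps i j hadj hdj hmin
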